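/- Let K be a compact metrizable topological group, let L be a closed subgroup of K, let μ be the pushforward to K/L of the Haar probability measure of K under the quotient map, and let G be a countable subgroup of K which, as a discrete group, admits an inner amenability sequence. Let G act on (K/L, μ) by left translation (a measure-preserving action). Then there exists a sequence (ξ_n) of nonnegative measurable functions on G × (K/L) with ‖ξ_n‖₁ = 1 for every n such that: (i) for every measurable A ⊆ K/L, ∑_{h∈G} ∫_X 1_A(p) 1_A(h·p) ξ_n(h, p) dμ(p) → μ(A); (ii) for every g ∈ G, ‖ξ_n^g − ξ_n‖₁ → 0; (iii) for every g ∈ G, ∫_{K/L} ξ_n(g, p) dμ(p) → 0; (iv) for every n and μ-almost every p ∈ K/L, ∑_{h∈G} ξ_n(h, p) = 1 and ∑_{h∈G} ξ_n(h, h⁻¹·p) = 1. (This is the concrete content of the corollary that the translation groupoid of the action of an inner amenable subgroup of a compact group on a homogeneous space is inner amenable.) -/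

import Mathlib

open Filter Topology MeasureTheory

/-- An inner amenability sequence for a countable discrete group `G`. -/
def InnerAmenabilitySeq {G : Type*} [Group G] (η : ℕ → G → ℝ) : Prop :=
  (∀ n g, 0 ≤ η n g) ∧
  (∀ n, HasSum (η n) 1) ∧
  (∀ g : G, Tendsto (fun n => ∑' h : G, |η n (g * h * g⁻¹) - η n h|) atTop (𝓝 0)) ∧
  (∀ g : G, Tendsto (fun n => η n g) atTop (𝓝 0))

/-!
Take `ξ n g p = σ n g`, independent of `p`. Then (ii)–(iv) are the defining properties of an
inner amenability sequence `σ`, and (i) holds as soon as the `σ n` concentrate at `1 ∈ K`, since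
`μ (A ∩ g⁻¹ A) → μ A` as `g → 1` (translation is continuous in measure).

To push a given inner amenability sequence `η` into a conjugation-invariant neighbourhood `W`
of `1`, cover the compact group `K` by `N` pieces `P` with `P⁻¹ P ⊆ W`. Some piece carries mass
at least `1 / N` for infinitely many `η n`. For two of them, `a = η n` and `b = η m`, the
convolution `ǎ * b` (the law of `s⁻¹ t`) gives mass at least `1 / N²` to `W`, is almost
conjugation invariant, and has small atoms once `m ≫ n`; restricting it to `W` and
renormalising costs at most a factor `N²`.
-/

section Convolution

variable {Γ : Type*} [Group Γ]

/-- `invConv a b` is the convolution `ǎ * b`, i.e. the law of `s⁻¹ * t` for independent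
`s ∼ a` and `t ∼ b`. -/
noncomputable def invConv (a b : Γ → ℝ) (g : Γ) : ℝ := ∑' s, a s * b (s * g)

noncomputable def conjDefect (g : Γ) (a : Γ → ℝ) : ℝ := ∑' h, |a (g * h * g⁻¹) - a h|

variable {a b a' b' : Γ → ℝ}

lemma hasSum_invConv_prod {α β : ℝ} (ha : ∀ g, 0 ≤ a g) (hb : ∀ g, 0 ≤ b g)
    (hA : HasSum a α) (hB : HasSum b β) :
    HasSum (fun p : Γ × Γ => a p.2 * b (p.2 * p.1)) (α * β) :=
  ((Equiv.prodComm Γ Γ).trans (Equiv.prodShear (Equiv.refl Γ) Equiv.mulLeft)).hasSum_iff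
    (f := fun p : Γ × Γ => a p.1 * b p.2) |>.2 <|
    hA.mul hB (hA.summable.mul_of_nonneg hB.summable ha hb)

lemma summable_invConv_fiber (ha : ∀ g, 0 ≤ a g) (hb : ∀ g, 0 ≤ b g)
    (hsa : Summable a) (hsb : Summable b) (g : Γ) : Summable fun s => a s * b (s * g) :=
  (hasSum_invConv_prod ha hb hsa.hasSum hsb.hasSum).summable.prod_factor g

lemma hasSum_invConv {α β : ℝ} (ha : ∀ g, 0 ≤ a g) (hb : ∀ g, 0 ≤ b g)
    (hA : HasSum a α) (hB : HasSum b β) : HasSum (invConv a b) (α * β) :=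
  (hasSum_invConv_prod ha hb hA hB).prod_fiberwise fun g =>
    (summable_invConv_fiber ha hb hA.summable hB.summable g).hasSum

lemma invConv_nonneg (ha : ∀ g, 0 ≤ a g) (hb : ∀ g, 0 ≤ b g) (g : Γ) : 0 ≤ invConv a b g :=
  tsum_nonneg fun s => mul_nonneg (ha s) (hb _)

lemma invConv_le_invConv (ha : ∀ g, 0 ≤ a g) (hb : ∀ g, 0 ≤ b g) (haa' : ∀ g, a g ≤ a' g)
    (hbb' : ∀ g, b g ≤ b' g) (hsa' : Summable a') (hsb' : Summable b') (g : Γ) :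
    invConv a b g ≤ invConv a' b' g := by
  have ha' g : 0 ≤ a' g := (ha g).trans (haa' g)
  have hb' g : 0 ≤ b' g := (hb g).trans (hbb' g)
  exact Summable.tsum_le_tsum (fun s => mul_le_mul (haa' s) (hbb' _) (hb _) (ha' s))
    (summable_invConv_fiber ha hb (hsa'.of_nonneg_of_le ha haa') (hsb'.of_nonneg_of_le hb hbb') g)
    (summable_invConv_fiber ha' hb' hsa' hsb' g)

lemma invConv_conj (u g : Γ) (a b : Γ → ℝ) :
    invConv a b (u * g * u⁻¹) =
      invConv (fun h => a (u * h * u⁻¹)) (fun h => b (u * h * u⁻¹)) g := by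
  rw [invConv, invConv, ← (MulAut.conj u).toEquiv.tsum_eq]
  simp [mul_assoc]

lemma abs_invConv_sub_le (ha : ∀ g, 0 ≤ a g) (hb : ∀ g, 0 ≤ b g) (ha' : ∀ g, 0 ≤ a' g)
    (hb' : ∀ g, 0 ≤ b' g) (hsa : Summable a) (hsb : Summable b) (hsa' : Summable a')
    (hsb' : Summable b') (g : Γ) :
    |invConv a b g - invConv a' b' g| ≤
      invConv (fun s => |a s - a' s|) b g + invConv a' (fun s => |b s - b' s|) g := by
  have h₁ := summable_invConv_fiber ha hb hsa hsb g
  have h₂ := summable_invConv_fiber ha' hb' hsa' hsb' g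
  have h₃ := summable_invConv_fiber (fun _ => abs_nonneg _) hb (hsa.sub hsa').abs hsb g
  have h₄ := summable_invConv_fiber ha' (fun _ => abs_nonneg _) hsa' (hsb.sub hsb').abs g
  rw [invConv, invConv, ← h₁.tsum_sub h₂, invConv, invConv, ← h₃.tsum_add h₄]
  refine tsum_of_norm_bounded (f := fun s => a s * b (s * g) - a' s * b' (s * g))
    (h₃.add h₄).hasSum fun s => ?_
  rw [Real.norm_eq_abs, show a s * b (s * g) - a' s * b' (s * g) =
    (a s - a' s) * b (s * g) + a' s * (b (s * g) - b' (s * g)) by ring]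
  refine (abs_add_le _ _).trans_eq ?_
  rw [abs_mul, abs_mul, abs_of_nonneg (hb _), abs_of_nonneg (ha' s)]

lemma tsum_abs_invConv_sub_le (ha : ∀ g, 0 ≤ a g) (hb : ∀ g, 0 ≤ b g) (ha' : ∀ g, 0 ≤ a' g)
    (hb' : ∀ g, 0 ≤ b' g) (hsa : Summable a) (hB : HasSum b 1) (hA' : HasSum a' 1)
    (hsb' : Summable b') :
    ∑' g, |invConv a b g - invConv a' b' g| ≤ ∑' s, |a s - a' s| + ∑' s, |b s - b' s| := by
  have h₁ := hasSum_invConv (fun _ => abs_nonneg _) hb (hsa.sub hA'.summable).abs.hasSum hB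
  have h₂ := hasSum_invConv ha' (fun _ => abs_nonneg _) hA' (hB.summable.sub hsb').abs.hasSum
  have hpt := abs_invConv_sub_le ha hb ha' hb' hsa hB.summable hA'.summable hsb'
  rw [← mul_one (∑' s, |a s - a' s|), ← one_mul (∑' s, |b s - b' s|)]
  exact hasSum_le hpt ((h₁.add h₂).summable.of_nonneg_of_le (fun _ => abs_nonneg _) hpt).hasSum
    (h₁.add h₂)

lemma hasSum_conj {c : Γ → ℝ} {γ : ℝ} (u : Γ) (hc : HasSum c γ) :
    HasSum (fun h => c (u * h * u⁻¹)) γ :=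
  (MulAut.conj u).toEquiv.hasSum_iff.2 hc

lemma conjDefect_invConv_le (ha : ∀ g, 0 ≤ a g) (hb : ∀ g, 0 ≤ b g) (hA : HasSum a 1)
    (hB : HasSum b 1) (g : Γ) :
    conjDefect g (invConv a b) ≤ conjDefect g a + conjDefect g b := by
  simp only [conjDefect, invConv_conj]
  exact tsum_abs_invConv_sub_le (fun _ => ha _) (fun _ => hb _) ha hb
    (hasSum_conj g hA).summable (hasSum_conj g hB) hA hB.summable

lemma tendsto_invConv_apply_zero {ι : Type*} {l : Filter ι} (ha : ∀ g, 0 ≤ a g)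
    (hsa : Summable a) {b : ι → Γ → ℝ} (hb : ∀ i g, 0 ≤ b i g) (hb1 : ∀ i g, b i g ≤ 1)
    (hb0 : ∀ g, Tendsto (fun i => b i g) l (𝓝 0)) (g : Γ) :
    Tendsto (fun i => invConv a (b i) g) l (𝓝 0) := by
  simpa [invConv] using tendsto_tsum_of_dominated_convergence hsa
    (fun s => (hb0 (s * g)).const_mul (a s)) <| .of_forall fun i s => by
      rw [Real.norm_eq_abs, abs_mul, abs_of_nonneg (ha s), abs_of_nonneg (hb i _)]
      exact mul_le_of_le_one_right (ha s) (hb1 i _)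

lemma conj_mem_iff_of_forall_conj_mem {S : Set Γ} (hS : ∀ u, ∀ g ∈ S, u * g * u⁻¹ ∈ S) (u g : Γ) :
    u * g * u⁻¹ ∈ S ↔ g ∈ S :=
  ⟨fun h => by simpa [mul_assoc] using hS u⁻¹ _ h, hS u g⟩

lemma conjDefect_indicator_le {S : Set Γ} (hS : ∀ u, ∀ g ∈ S, u * g * u⁻¹ ∈ S) {τ : Γ → ℝ}
    (hτ : Summable τ) (g : Γ) : conjDefect g (S.indicator τ) ≤ conjDefect g τ := by
  have hpt h : |S.indicator τ (g * h * g⁻¹) - S.indicator τ h| ≤ |τ (g * h * g⁻¹) - τ h| := by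
    by_cases hh : h ∈ S
    · simp [hh, (conj_mem_iff_of_forall_conj_mem hS g h).2 hh]
    · simp [hh, mt (conj_mem_iff_of_forall_conj_mem hS g h).1 hh]
  have hs : Summable fun h => |τ (g * h * g⁻¹) - τ h| :=
    ((hasSum_conj g hτ.hasSum).summable.sub hτ).abs
  exact Summable.tsum_le_tsum hpt (hs.of_nonneg_of_le (fun _ => abs_nonneg _) hpt) hs

lemma conjDefect_const_mul (r : ℝ) (a : Γ → ℝ) (g : Γ) :
    conjDefect g (fun h => r * a h) = |r| * conjDefect g a := by
  simp only [conjDefect, ← mul_sub, abs_mul, tsum_mul_left]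

lemma exists_normalized_indicator {S : Set Γ} (hS : ∀ u, ∀ g ∈ S, u * g * u⁻¹ ∈ S)
    {τ : Γ → ℝ} (hτ0 : ∀ g, 0 ≤ τ g) (hτ : Summable τ) {r : ℝ} (hr : 0 < r)
    (hmass : r ≤ ∑' g, S.indicator τ g) :
    ∃ σ : Γ → ℝ, (∀ g, 0 ≤ σ g) ∧ HasSum σ 1 ∧ (∀ g ∉ S, σ g = 0) ∧
      ∀ g, conjDefect g σ ≤ conjDefect g τ / r ∧ σ g ≤ τ g / r := by
  set C := ∑' g, S.indicator τ g
  have hC : 0 < C := hr.trans_le hmass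
  have hCr : C⁻¹ ≤ r⁻¹ := inv_anti₀ hr hmass
  refine ⟨fun g => C⁻¹ * S.indicator τ g, fun g => ?_, ?_, fun g hg => by simp [hg],
    fun g => ⟨?_, ?_⟩⟩
  · exact mul_nonneg (inv_nonneg.2 hC.le) (Set.indicator_nonneg (fun g _ => hτ0 g) g)
  · have h := (hτ.indicator S).hasSum.mul_left C⁻¹
    rwa [inv_mul_cancel₀ hC.ne'] at h
  · rw [conjDefect_const_mul, abs_of_pos (inv_pos.2 hC), div_eq_inv_mul]
    exact mul_le_mul hCr (conjDefect_indicator_le hS hτ g) (tsum_nonneg fun _ => abs_nonneg _)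
      (inv_nonneg.2 hr.le)
  · rw [div_eq_inv_mul]
    exact mul_le_mul hCr (Set.indicator_le_self' (fun g _ => hτ0 g) g)
      (Set.indicator_nonneg (fun g _ => hτ0 g) g) (inv_nonneg.2 hr.le)

lemma mul_le_tsum_indicator_invConv {S T : Set Γ} (hTS : ∀ s ∈ T, ∀ t ∈ T, s⁻¹ * t ∈ S)
    (ha : ∀ g, 0 ≤ a g) (hb : ∀ g, 0 ≤ b g) (hsa : Summable a) (hsb : Summable b) :
    (∑' g, T.indicator a g) * ∑' g, T.indicator b g ≤ ∑' g, S.indicator (invConv a b) g := by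
  have haT := Set.indicator_nonneg (s := T) fun g _ => ha g
  have hbT := Set.indicator_nonneg (s := T) fun g _ => hb g
  have hw := hasSum_invConv haT hbT (hsa.indicator T).hasSum (hsb.indicator T).hasSum
  refine hw.tsum_eq ▸ Summable.tsum_le_tsum (fun g => ?_) hw.summable
    ((hasSum_invConv ha hb hsa.hasSum hsb.hasSum).summable.indicator S)
  by_cases hg : g ∈ S
  · rw [Set.indicator_of_mem hg]
    exact invConv_le_invConv haT hbT (Set.indicator_le_self' fun g _ => ha g)
      (Set.indicator_le_self' fun g _ => hb g) hsa hsb g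
  · have hzero s : T.indicator a s * T.indicator b (s * g) = 0 := by
      by_cases hs : s ∈ T
      · by_cases hsg : s * g ∈ T
        · exact absurd (by simpa using hTS s hs _ hsg) hg
        · simp [hsg]
      · simp [hs]
    simp [invConv, hzero, hg]

end Convolution

section Pigeonhole

variable {α ι : Type*} [Fintype ι]

lemma sum_tsum_indicator_fiber (c : α → ι) {a : α → ℝ} (ha : Summable a) :
    ∑ i, ∑' x, (c ⁻¹' {i}).indicator a x = ∑' x, a x := by
  rw [← Summable.tsum_finsetSum fun i _ => ha.indicator _]
  refine tsum_congr fun x => ?_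
  classical
  simp [Set.indicator_apply]

lemma exists_le_tsum_indicator_fiber [Nonempty ι] (c : α → ι) {a : α → ℝ} (ha : HasSum a 1) :
    ∃ i, (Fintype.card ι : ℝ)⁻¹ ≤ ∑' x, (c ⁻¹' {i}).indicator a x := by
  obtain ⟨i, -, hi⟩ := Finset.exists_le_of_sum_le Finset.univ_nonempty
    (f := fun _ => (Fintype.card ι : ℝ)⁻¹) (g := fun i => ∑' x, (c ⁻¹' {i}).indicator a x)
    (by simp [sum_tsum_indicator_fiber c ha.summable, ha.tsum_eq])
  exact ⟨i, hi⟩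

lemma exists_frequently_le_tsum_indicator_fiber [Nonempty ι] (c : α → ι) {η : ℕ → α → ℝ}
    (hη : ∀ n, HasSum (η n) 1) :
    ∃ i, ∃ᶠ n in atTop, (Fintype.card ι : ℝ)⁻¹ ≤ ∑' x, (c ⁻¹' {i}).indicator (η n) x := by
  choose f hf using fun n => exists_le_tsum_indicator_fiber c (hη n)
  obtain ⟨i, hi⟩ := Finite.exists_infinite_fiber f
  exact ⟨i, Nat.frequently_atTop_iff_infinite.2 <|
    (Set.infinite_coe_iff.1 hi).mono fun n (hn : f n = i) => hn ▸ hf n⟩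

end Pigeonhole

namespace InnerAmenabilitySeq

variable {Γ : Type*} [Group Γ] {η : ℕ → Γ → ℝ}

theorem exists_approx (hη : InnerAmenabilitySeq η) {S : Set Γ}
    (hS : ∀ u, ∀ g ∈ S, u * g * u⁻¹ ∈ S) {ι : Type*} [Fintype ι] (c : Γ → ι)
    (hc : ∀ s t, c s = c t → s⁻¹ * t ∈ S) (F : Finset Γ) {ε : ℝ} (hε : 0 < ε) :
    ∃ σ : Γ → ℝ, (∀ g, 0 ≤ σ g) ∧ HasSum σ 1 ∧ (∀ g ∉ S, σ g = 0) ∧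
      ∀ g ∈ F, conjDefect g σ ≤ ε ∧ σ g ≤ ε := by
  obtain ⟨hpos, hsum, hconj, hpt⟩ := hη
  have : Nonempty ι := ⟨c 1⟩
  set δ : ℝ := (Fintype.card ι : ℝ)⁻¹
  have hδ : 0 < δ := inv_pos.2 (Nat.cast_pos.2 Fintype.card_pos)
  set ε' := ε * δ ^ 2 / 2 with hε'_def
  have hε' : 0 < ε' := by positivity
  obtain ⟨i, hi⟩ := exists_frequently_le_tsum_indicator_fiber c hsum
  have hdefect : ∀ᶠ n in atTop, ∀ g ∈ F, conjDefect g (η n) ≤ ε' :=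
    (eventually_all_finset F).2 fun g _ => (hconj g).eventually (ge_mem_nhds hε')
  obtain ⟨n, hn, hn_defect⟩ := (hi.and_eventually hdefect).exists
  have hatoms : ∀ᶠ m in atTop, ∀ g ∈ F, invConv (η n) (η m) g ≤ ε' :=
    (eventually_all_finset F).2 fun g _ => (tendsto_invConv_apply_zero (hpos n)
      (hsum n).summable hpos (fun m g => le_hasSum (hsum m) g fun h _ => hpos m h) hpt g).eventually
        (ge_mem_nhds hε')
  obtain ⟨m, hm, hm_defect, hm_atoms⟩ := (hi.and_eventually (hdefect.and hatoms)).exists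
  -- Two sequence elements charging the same piece `c ⁻¹' {i}` give `ǎ * b` mass `δ²` on `S`.
  have hmass : δ ^ 2 ≤ ∑' g, S.indicator (invConv (η n) (η m)) g :=
    (sq δ ▸ mul_le_mul hn hm hδ.le (tsum_nonneg fun g => Set.indicator_nonneg
        (fun g _ => hpos n g) g)).trans <|
      mul_le_tsum_indicator_invConv
        (fun s (hs : c s = i) t (ht : c t = i) => hc s t (hs.trans ht.symm))
        (hpos n) (hpos m) (hsum n).summable (hsum m).summable
  obtain ⟨σ, hσ0, hσ1, hσS, hσ⟩ := exists_normalized_indicator hS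
    (invConv_nonneg (hpos n) (hpos m)) (hasSum_invConv (hpos n) (hpos m) (hsum n) (hsum m)).summable
    (pow_pos hδ 2) hmass
  refine ⟨σ, hσ0, hσ1, hσS, fun g hg => ⟨(hσ g).1.trans ?_, (hσ g).2.trans ?_⟩⟩
  · rw [div_le_iff₀ (pow_pos hδ 2)]
    linarith [conjDefect_invConv_le (hpos n) (hpos m) (hsum n) (hsum m) g, hn_defect g hg,
      hm_defect g hg, hε'_def]
  · rw [div_le_iff₀ (pow_pos hδ 2)]
    linarith [hm_atoms g hg, hε'_def]

theorem exists_supported [Countable Γ] (hη : InnerAmenabilitySeq η) {S : ℕ → Set Γ}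
    (hS : ∀ j u, ∀ g ∈ S j, u * g * u⁻¹ ∈ S j) {ι : ℕ → Type*} [∀ j, Fintype (ι j)]
    (c : ∀ j, Γ → ι j) (hc : ∀ j s t, c j s = c j t → s⁻¹ * t ∈ S j) :
    ∃ σ : ℕ → Γ → ℝ, InnerAmenabilitySeq σ ∧ ∀ j, ∀ g ∉ S j, σ j g = 0 := by
  classical
  obtain ⟨e, he⟩ := exists_surjective_nat Γ
  choose σ hσ0 hσ1 hσS hσ using fun j : ℕ => hη.exists_approx (hS j) (c j) (hc j)
    ((Finset.range (j + 1)).image e) (Nat.one_div_pos_of_nat (α := ℝ) (n := j))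
  have hF g : ∀ᶠ j in atTop, g ∈ (Finset.range (j + 1)).image e := by
    obtain ⟨k, rfl⟩ := he g
    filter_upwards [eventually_ge_atTop k] with j hj
    exact Finset.mem_image_of_mem e (Finset.mem_range.2 (Nat.lt_succ_of_le hj))
  refine ⟨σ, ⟨hσ0, hσ1, fun g => ?_, fun g => ?_⟩, hσS⟩
  · exact squeeze_zero' (.of_forall fun j => tsum_nonneg fun _ => abs_nonneg _)
      ((hF g).mono fun j hj => (hσ j g hj).1) tendsto_one_div_add_atTop_nhds_zero_nat
  · exact squeeze_zero' (.of_forall fun j => hσ0 j g)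
      ((hF g).mono fun j hj => (hσ j g hj).2) tendsto_one_div_add_atTop_nhds_zero_nat

end InnerAmenabilitySeq

section CompactGroup

variable {K : Type*} [Group K] [TopologicalSpace K] [IsTopologicalGroup K] [CompactSpace K]

lemma exists_conj_invariant_nhds_one_subset {U : Set K} (hU : U ∈ 𝓝 1) :
    ∃ W ∈ 𝓝 (1 : K), (∀ u, ∀ k ∈ W, u * k * u⁻¹ ∈ W) ∧ W ⊆ U := by
  refine ⟨{k | ∀ u, u * k * u⁻¹ ∈ U}, ?_, fun u k hk v => by simpa [mul_assoc] using hk (v * u),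
    fun k hk => by simpa using hk 1⟩
  have hcont : Continuous fun z : K × K => z.2 * z.1 * z.2⁻¹ := by fun_prop
  exact (isCompact_univ.eventually_forall_of_forall_eventually (x₀ := (1 : K))
    (P := fun k u => u * k * u⁻¹ ∈ U) fun u _ =>
      hcont.continuousAt (x := ((1 : K), u)) (by simpa using hU)).mono fun k hk u => hk u trivial

lemma exists_finset_coloring {W : Set K} (hW : W ∈ 𝓝 1) :
    ∃ (t : Finset K) (c : K → t), ∀ x y, c x = c y → x⁻¹ * y ∈ W := by
  obtain ⟨V, hV, hVW⟩ := exists_nhds_split_inv hW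
  obtain ⟨t, ht⟩ := compact_covered_by_mul_left_translates isCompact_univ
    ⟨1, mem_interior_iff_mem_nhds.2 (inv_mem_nhds_one K hV)⟩
  have hcover x : ∃ z ∈ t, (z * x)⁻¹ ∈ V := by simpa using ht (Set.mem_univ x)
  choose z hzt hz using hcover
  refine ⟨t, fun x => ⟨z x, hzt x⟩, fun x y hxy => ?_⟩
  have hzxy : z x = z y := congrArg Subtype.val hxy
  simpa [hzxy, div_eq_mul_inv, mul_assoc] using hVW _ (hz x) _ (hz y)

end CompactGroup

open scoped symmDiff in
lemma tendsto_measureReal_inter_preimage_smul {M X : Type*} [Monoid M] [TopologicalSpace M]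
    [TopologicalSpace X] [R1Space X] [MeasurableSpace X] [BorelSpace X] [MulAction M X]
    [ContinuousSMul M X] {μ : Measure X} [IsFiniteMeasure μ] [μ.InnerRegularCompactLTTop]
    [SMulInvariantMeasure M X μ] {s : Set X} (hs : MeasurableSet s) :
    Tendsto (fun c : M => μ.real (s ∩ (c • ·) ⁻¹' s)) (𝓝 1) (𝓝 (μ.real s)) := by
  have hf : Continuous fun c : M => (⟨(c • ·), continuous_const_smul c⟩ : C(X, X)) :=
    (ContinuousMap.curry ⟨fun p : M × X => p.1 • p.2, continuous_smul⟩).continuous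
  have hsymm : Tendsto (fun c : M => μ.real (((c • ·) ⁻¹' s) ∆ s)) (𝓝 1) (𝓝 0) := by
    have := (ENNReal.tendsto_toReal ENNReal.zero_ne_top).comp <|
      tendsto_measure_symmDiff_preimage_nhds_zero (μ := μ) (ν := μ) (hf.tendsto 1)
        (.of_forall fun c => measurePreserving_smul c μ) (measurePreserving_smul (1 : M) μ)
        hs.nullMeasurableSet (measure_ne_top μ s)
    simpa [Measure.real, Function.comp_def] using this
  refine tendsto_iff_norm_sub_tendsto_zero.2 <|
    squeeze_zero (fun _ => norm_nonneg _) (fun c => ?_) hsymm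
  have hc : MeasurableSet ((c • ·) ⁻¹' s) := measurable_const_smul c hs
  rw [Real.norm_eq_abs, abs_sub_comm, ← measureReal_inter_add_sdiff (s := s) hc,
    add_sub_cancel_left, abs_of_nonneg measureReal_nonneg]
  exact measureReal_mono fun x hx => Or.inr hx

section Quotient

variable {K : Type*} [Group K] [MeasurableSpace K] (L : Subgroup K)

lemma measurable_const_smul_quotient [MeasurableMul K] (k : K) :
    Measurable fun p : K ⧸ L => k • p :=
  (measurable_from_quotient (s := QuotientGroup.leftRel L)).2
    (measurable_quotient_mk''.comp (measurable_const_mul k))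

lemma tendsto_measureReal_inter_preimage_smul_quotient [TopologicalSpace K]
    [IsTopologicalGroup K] [BorelSpace K] (ν : Measure K) [IsFiniteMeasure ν]
    [ν.InnerRegularCompactLTTop] [ν.IsMulLeftInvariant] {A : Set (K ⧸ L)} (hA : MeasurableSet A) :
    Tendsto (fun k : K => (ν.map QuotientGroup.mk).real (A ∩ (k • ·) ⁻¹' A)) (𝓝 1)
      (𝓝 ((ν.map QuotientGroup.mk).real A)) := by
  have hmk : Measurable (QuotientGroup.mk : K → K ⧸ L) := measurable_quotient_mk''
  have hpull (k : K) : (ν.map QuotientGroup.mk).real (A ∩ (k • ·) ⁻¹' A) =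
      ν.real (QuotientGroup.mk ⁻¹' A ∩ (k • ·) ⁻¹' (QuotientGroup.mk ⁻¹' A)) :=
    map_measureReal_apply hmk (hA.inter (measurable_const_smul_quotient L k hA))
  simp only [hpull, map_measureReal_apply hmk hA]
  exact tendsto_measureReal_inter_preimage_smul (M := K) (hmk hA)

end Quotient

lemma integral_indicator_mul_indicator_comp {X : Type*} [MeasurableSpace X] (μ : Measure X)
    {A : Set X} (hA : MeasurableSet A) {f : X → X} (hf : Measurable f) :
    ∫ p, A.indicator (fun _ => (1 : ℝ)) p * A.indicator (fun _ => (1 : ℝ)) (f p) ∂μ =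
      μ.real (A ∩ f ⁻¹' A) := by
  rw [← integral_indicator_one (hA.inter (hf hA)), Set.inter_indicator_one]
  rfl

lemma tendsto_tsum_mul_of_eventually_support_subset {α : Type*} {σ : ℕ → α → ℝ}
    (hσ0 : ∀ n x, 0 ≤ σ n x) (hσ1 : ∀ n, HasSum (σ n) 1) {l : Filter α}
    (hl : ∀ s ∈ l, ∀ᶠ n in atTop, ∀ x ∉ s, σ n x = 0) {φ : α → ℝ} {c : ℝ}
    (hφ : Tendsto φ l (𝓝 c)) : Tendsto (fun n => ∑' x, σ n x * φ x) atTop (𝓝 c) := by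
  refine Metric.tendsto_nhds.2 fun ε hε => ?_
  filter_upwards [hl _ (hφ (Metric.closedBall_mem_nhds c (half_pos hε)))] with n hn
  have hpt x : ‖σ n x * (φ x - c)‖ ≤ ε / 2 * σ n x := by
    by_cases hx : x ∈ φ ⁻¹' Metric.closedBall c (ε / 2)
    · rw [norm_mul, Real.norm_of_nonneg (hσ0 n x), mul_comm]
      exact mul_le_mul_of_nonneg_right hx (hσ0 n x)
    · simp [hn x hx]
  have hsum : ∑' x, σ n x * φ x = ∑' x, σ n x * (φ x - c) + c := by
    have h := ((hσ1 n).summable.mul_left (ε / 2) |>.of_norm_bounded hpt).hasSum.add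
      ((hσ1 n).mul_right c)
    rw [one_mul] at h
    rw [← h.tsum_eq]
    exact tsum_congr fun x => by ring
  rw [Real.dist_eq, hsum, add_sub_cancel_right]
  have := tsum_of_norm_bounded ((hσ1 n).mul_left (ε / 2)) hpt
  rw [mul_one] at this
  exact this.trans_lt (half_lt_self hε)

theorem innerAmenable_translation_groupoid_of_compact_homogeneous_space_general
    {K : Type*} [Group K] [TopologicalSpace K] [IsTopologicalGroup K]
    [CompactSpace K] [TopologicalSpace.MetrizableSpace K]
    [MeasurableSpace K] [BorelSpace K]
    (ν : Measure K) [ν.IsHaarMeasure] [IsProbabilityMeasure ν]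
    (L : Subgroup K)
    (G : Subgroup K) [Countable G]
    (η : ℕ → G → ℝ) (hη : InnerAmenabilitySeq η)
    (μ : Measure (K ⧸ L)) (hμ : μ = Measure.map (QuotientGroup.mk : K → K ⧸ L) ν) :
    ∃ ξ : ℕ → G → (K ⧸ L) → ℝ,
      (∀ n g, Measurable (ξ n g)) ∧
      (∀ n g p, 0 ≤ ξ n g p) ∧
      (∀ n, ∑' g : G, ∫ p, ξ n g p ∂μ = 1) ∧
      -- (i) balanced
      (∀ A : Set (K ⧸ L), MeasurableSet A →
        Tendsto
          (fun n => ∑' g : G,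
            ∫ p, A.indicator (fun _ => (1 : ℝ)) p *
              A.indicator (fun _ => (1 : ℝ)) ((g : K) • p) * ξ n g p ∂μ)
          atTop (𝓝 (μ A).toReal)) ∧
      -- (ii) asymptotically conjugation-invariant
      (∀ g : G,
        Tendsto
          (fun n => ∑' h : G, ∫ p, |ξ n (g * h * g⁻¹) ((g : K) • p) - ξ n h p| ∂μ)
          atTop (𝓝 0)) ∧
      -- (iii) diffuse
      (∀ g : G, Tendsto (fun n => ∫ p, ξ n g p ∂μ) atTop (𝓝 0)) ∧
      -- (iv) fiberwise mass one
      (∀ n, ∀ᵐ p ∂μ,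
        HasSum (fun g : G => ξ n g p) 1 ∧ HasSum (fun g : G => ξ n g ((g : K)⁻¹ • p)) 1) := by
  subst hμ
  have : IsProbabilityMeasure (ν.map (QuotientGroup.mk : K → K ⧸ L)) :=
    Measure.isProbabilityMeasure_map measurable_quotient_mk''.aemeasurable
  obtain ⟨U, hU⟩ := (𝓝 (1 : K)).exists_antitone_basis
  choose W hW hWconj hWU using fun j => exists_conj_invariant_nhds_one_subset (hU.mem j)
  choose t c hc using fun j => exists_finset_coloring (hW j)
  obtain ⟨σ, ⟨hσ0, hσ1, hσconj, hσatom⟩, hσW⟩ := hη.exists_supported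
    (S := fun j => ((↑) : G → K) ⁻¹' W j) (fun j u g hg => hWconj j u g hg)
    (fun j g => c j g) (fun j s t hst => hc j s t hst)
  have hconc : ∀ s ∈ comap ((↑) : G → K) (𝓝 1), ∀ᶠ j in atTop, ∀ g ∉ s, σ j g = 0 := by
    rintro s ⟨V, hV, hVs⟩
    filter_upwards [hU.tendsto_smallSets.eventually (eventually_smallSets_subset.2 hV)] with j hj
    exact fun g hg => hσW j g fun hgW => hg (hVs (hj (hWU j hgW)))
  refine ⟨fun n g _ => σ n g, fun _ _ => measurable_const, fun n g _ => hσ0 n g,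
    fun n => by simpa using (hσ1 n).tsum_eq, fun A hA => ?_, fun g => by simpa using hσconj g,
    fun g => by simpa using hσatom g, fun n => ae_of_all _ fun _ => ⟨hσ1 n, hσ1 n⟩⟩
  have hφ := (tendsto_measureReal_inter_preimage_smul_quotient L ν hA).comp
    (tendsto_comap (f := ((↑) : G → K)))
  refine (tendsto_tsum_mul_of_eventually_support_subset hσ0 hσ1 hconc hφ).congr fun n =>
    tsum_congr fun g => ?_
  rw [integral_mul_const, integral_indicator_mul_indicator_comp _ hA
    (measurable_const_smul_quotient L _), mul_comm]
  rfl

/-- Let `K` be a compact metrizable topological group, `L ≤ K` a closed subgroup, `μ` the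
pushforward to `K ⧸ L` of the Haar probability measure of `K`, and `G ≤ K` a countable
subgroup admitting an inner amenability sequence as a discrete group.  Let `G` act on
`(K ⧸ L, μ)` by left translation.  Then there is a sequence `(ξ n)` of nonnegative
measurable functions on `G × (K ⧸ L)` of total mass `1` which is balanced (i), asymptotically
conjugation-invariant (ii), diffuse (iii), and fiberwise of mass one (iv), i.e. the
translation groupoid `G ⋉ (K ⧸ L, μ)` is inner amenable. -/
theorem innerAmenable_translation_groupoid_of_compact_homogeneous_space
    {K : Type*} [Group K] [TopologicalSpace K] [IsTopologicalGroup K]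
    [CompactSpace K] [TopologicalSpace.MetrizableSpace K]
    [MeasurableSpace K] [BorelSpace K]
    (ν : Measure K) [ν.IsHaarMeasure] [IsProbabilityMeasure ν]
    (L : Subgroup K) (hL : IsClosed (L : Set K))
    (G : Subgroup K) [Countable G]
    (η : ℕ → G → ℝ) (hη : InnerAmenabilitySeq η)
    (μ : Measure (K ⧸ L)) (hμ : μ = Measure.map (QuotientGroup.mk : K → K ⧸ L) ν) :
    ∃ ξ : ℕ → G → (K ⧸ L) → ℝ,
      (∀ n g, Measurable (ξ n g)) ∧
      (∀ n g p, 0 ≤ ξ n g p) ∧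
      (∀ n, ∑' g : G, ∫ p, ξ n g p ∂μ = 1) ∧
      -- (i) balanced
      (∀ A : Set (K ⧸ L), MeasurableSet A →
        Tendsto
          (fun n => ∑' g : G,
            ∫ p, A.indicator (fun _ => (1 : ℝ)) p *
              A.indicator (fun _ => (1 : ℝ)) ((g : K) • p) * ξ n g p ∂μ)
          atTop (𝓝 (μ A).toReal)) ∧
      -- (ii) asymptotically conjugation-invariant
      (∀ g : G,
        Tendsto
          (fun n => ∑' h : G, ∫ p, |ξ n (g * h * g⁻¹) ((g : K) • p) - ξ n h p| ∂μ)
          atTop (𝓝 0)) ∧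
      -- (iii) diffuse
      (∀ g : G, Tendsto (fun n => ∫ p, ξ n g p ∂μ) atTop (𝓝 0)) ∧
      -- (iv) fiberwise mass one
      (∀ n, ∀ᵐ p ∂μ,
        HasSum (fun g : G => ξ n g p) 1 ∧ HasSum (fun g : G => ξ n g ((g : K)⁻¹ • p)) 1) :=
  innerAmenable_translation_groupoid_of_compact_homogeneous_space_general ν L G η hη μ hμ
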